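/- For all t > 0 with t ≠ 1, F2'(t) ≥ 0, where F2'(t) = ((3t^4 + 2t^2 + 3)/(8t^4))·ln|(t+1)/(t-1)| - (3t^2+3)/(4t^3). -/

import Mathlib

/-!
With `r = logRatioMinorant`, i.e. `r t = 6 t (1 + t²) / (3 + 2 t² + 3 t⁴)`, one has
`F2' t = (3 t⁴ + 2 t² + 3) / (8 t⁴) · (log |(t + 1)/(t - 1)| - r t)`, with a positive prefactor.
Both `r` and `log |(t + 1)/(t - 1)|` are invariant under `t ↦ 1/t`, so it suffices to show
`r x ≤ log ((1 + x)/(1 - x))` on `[0, 1)`. The difference vanishes at `0` and has derivative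
`128 x⁴ / ((1 - x²)(3 + 2 x² + 3 x⁴)²) ≥ 0`.
-/

noncomputable def F2' (t : ℝ) : ℝ :=
  ((3*t^4 + 2*t^2 + 3)/(8*t^4)) * Real.log |(t+1)/(t-1)| - (3*t^2 + 3)/(4*t^3)

open Real Set

noncomputable def logRatioMinorant (x : ℝ) : ℝ := 6*x*(1+x^2)/(3+2*x^2+3*x^4)

lemma logRatioMinorant_inv (t : ℝ) : logRatioMinorant t⁻¹ = logRatioMinorant t := by
  rcases eq_or_ne t 0 with rfl | ht
  · simp
  unfold logRatioMinorant
  field_simp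
  ring

lemma log_abs_add_one_div_sub_one_inv (t : ℝ) :
    log |(t⁻¹+1)/(t⁻¹-1)| = log |(t+1)/(t-1)| := by
  rcases eq_or_ne t 0 with rfl | ht
  · simp
  have : (t⁻¹+1)/(t⁻¹-1) = -((t+1)/(t-1)) := by
    rcases eq_or_ne t 1 with rfl | ht1
    · norm_num
    field_simp [sub_ne_zero.mpr ht1, sub_ne_zero.mpr ht1.symm]
    ring
  rw [this, abs_neg]

lemma hasDerivAt_logRatioMinorant (x : ℝ) :
    HasDerivAt logRatioMinorant
      (6*(1-x^2)*(3+10*x^2+3*x^4)/(3+2*x^2+3*x^4)^2) x := by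
  have hD : (3+2*x^2+3*x^4 : ℝ) ≠ 0 := by positivity
  have hnum : HasDerivAt (fun y ↦ 6*y*(1+y^2)) (6+18*x^2) x :=
    (((hasDerivAt_id' x).const_mul 6).mul ((hasDerivAt_pow 2 x).const_add 1)).congr_deriv
      (by push_cast; ring)
  have hden : HasDerivAt (fun y ↦ 3+2*y^2+3*y^4) (4*x+12*x^3) x :=
    ((((hasDerivAt_pow 2 x).const_mul 2).const_add 3).add
      ((hasDerivAt_pow 4 x).const_mul 3)).congr_deriv (by push_cast; ring)
  exact (hnum.div hden hD).congr_deriv (by ring)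

lemma hasDerivAt_log_ratio_sub_logRatioMinorant {x : ℝ} (hx : x ∈ Ioo (-1 : ℝ) 1) :
    HasDerivAt (fun y ↦ log (1+y) - log (1-y) - logRatioMinorant y)
      (128*x^4/((1-x^2)*(3+2*x^2+3*x^4)^2)) x := by
  obtain ⟨hx₁, hx₂⟩ := hx
  have hplus : (1 + x : ℝ) ≠ 0 := by linarith
  have hminus : (1 - x : ℝ) ≠ 0 := by linarith
  have hsq : (1 - x^2 : ℝ) ≠ 0 := by nlinarith
  refine ((((hasDerivAt_id' x).const_add 1).log hplus).sub
    (((hasDerivAt_id' x).const_sub 1).log hminus) |>.sub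
      (hasDerivAt_logRatioMinorant x)).congr_deriv ?_
  field_simp
  ring

lemma logRatioMinorant_le_log {x : ℝ} (hx₀ : 0 ≤ x) (hx₁ : x < 1) :
    logRatioMinorant x ≤ log ((1+x)/(1-x)) := by
  have hmono : MonotoneOn (fun y ↦ log (1+y) - log (1-y) - logRatioMinorant y) (Icc 0 x) := by
    have hderiv (y : ℝ) (hy : y ∈ Icc 0 x) := hasDerivAt_log_ratio_sub_logRatioMinorant
      (x := y) ⟨by linarith [hy.1], by linarith [hy.2]⟩
    refine monotoneOn_of_hasDerivWithinAt_nonneg (convex_Icc 0 x)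
      (fun y hy ↦ (hderiv y hy).continuousAt.continuousWithinAt)
      (fun y hy ↦ (hderiv y (interior_subset hy)).hasDerivWithinAt) fun y hy ↦ ?_
    rw [interior_Icc] at hy
    have : 0 < 1 - y^2 := by nlinarith [hy.1, hy.2]
    positivity
  have h := hmono (left_mem_Icc.mpr hx₀) (right_mem_Icc.mpr hx₀) hx₀
  simp only [add_zero, sub_zero, log_one, logRatioMinorant] at h
  rw [log_div (by linarith) (by linarith)]
  unfold logRatioMinorant
  linarith

lemma logRatioMinorant_le_log_abs {t : ℝ} (ht : 0 < t) (ht1 : t ≠ 1) :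
    logRatioMinorant t ≤ log |(t+1)/(t-1)| := by
  wlog h : t < 1 generalizing t
  · have h1 : 1 < t := lt_of_le_of_ne (not_lt.mp h) ht1.symm
    rw [← logRatioMinorant_inv, ← log_abs_add_one_div_sub_one_inv]
    exact this (inv_pos.mpr ht) (inv_ne_one.mpr ht1) (inv_lt_one_of_one_lt₀ h1)
  have : |(t+1)/(t-1)| = (1+t)/(1-t) := by
    rw [abs_div, abs_of_pos (by linarith), abs_of_neg (by linarith), neg_sub, add_comm]
  rw [this]
  exact logRatioMinorant_le_log ht.le h

lemma F2'_eq_mul {t : ℝ} (ht : t ≠ 0) :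
    F2' t = (3*t^4 + 2*t^2 + 3)/(8*t^4) * (log |(t+1)/(t-1)| - logRatioMinorant t) := by
  unfold F2' logRatioMinorant
  field_simp
  ring

theorem stmt_7 (t : ℝ) (ht : 0 < t) (ht1 : t ≠ 1) : 0 ≤ F2' t := by
  rw [F2'_eq_mul ht.ne']
  exact mul_nonneg (by positivity) (sub_nonneg.mpr (logRatioMinorant_le_log_abs ht ht1))
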